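/- arXiv:math/0409068 — 3 statements merged into one kernel-verified Lean document; each statement's English description precedes it below -/
import Mathlib

section
/- A space X satisfies S1(C_Τ, C) if, and only if, for every continuous function Ψ : X → 2^(ℕ×ℕ), if the image Ψ[X] is a τ-family, then Ψ[X] is o-diagonalizable. -/
/-! Read a map `Ψ : X → 2^(ℕ×ℕ)` row by row: row `n` is the sequence of sets
`{x | Ψ x (n, m) = 1}`, all clopen exactly when `Ψ` is continuous. `Ψ[X]` is a τ-family exactly
when every row is a τ-sequence (each point in infinitely many terms, index sets of points
comparable modulo finite), and an o-diagonalization picks one term from each row so that the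
picks cover `X`. So the theorem comes down to translating between τ-sequences and τ-covers:
an injective enumeration of a τ-cover is a τ-sequence, and the range of a τ-sequence of proper
subsets is a τ-cover. A row containing the whole space is o-diagonalized trivially. -/

open Set Filter Cardinal
open scoped Classical

noncomputable section

/-- The Cantor space `2^ℕ`. -/
abbrev Cantor := ℕ → Bool

/-- Arrays: elements of `2^(ℕ×ℕ)`. -/
abbrev Arr := ℕ × ℕ → Bool

/-- A γ-array: every row is eventually 1. -/
def IsGammaArray (A : Arr) : Prop := ∀ n, ∀ᶠ m in atTop, A (n, m) = true

/-- A γ-family: a set of γ-arrays. -/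
def GammaFamily (𝒜 : Set Arr) : Prop := ∀ A ∈ 𝒜, IsGammaArray A

/-- A family of arrays is finitely τ-diagonalizable. -/
def FinTauDiag (𝒜 : Set Arr) : Prop :=
  ∃ F : ℕ → Finset ℕ,
    (∀ A ∈ 𝒜, ∃ᶠ n in atTop, ∃ m ∈ F n, A (n, m) = true) ∧
    (∀ A ∈ 𝒜, ∀ B ∈ 𝒜,
      (∀ᶠ n in atTop, ∀ m ∈ F n, A (n, m) ≤ B (n, m)) ∨
      (∀ᶠ n in atTop, ∀ m ∈ F n, B (n, m) ≤ A (n, m)))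

/-- A family of arrays is semi τ-diagonalizable (via a partial function with domain `D`). -/
def SemiTauDiag (𝒜 : Set Arr) : Prop :=
  ∃ (D : Set ℕ) (g : ℕ → ℕ),
    (∀ A ∈ 𝒜, ∃ᶠ n in atTop, n ∈ D ∧ A (n, g n) = true) ∧
    (∀ A ∈ 𝒜, ∀ B ∈ 𝒜,
      (∀ᶠ n in atTop, n ∈ D → A (n, g n) ≤ B (n, g n)) ∨
      (∀ᶠ n in atTop, n ∈ D → B (n, g n) ≤ A (n, g n)))

/-- A τ-family of arrays. -/
def TauFamily (𝒜 : Set Arr) : Prop :=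
  (∀ A ∈ 𝒜, ∀ n, ∃ᶠ m in atTop, A (n, m) = true) ∧
  (∀ A ∈ 𝒜, ∀ B ∈ 𝒜, ∀ n,
    (∀ᶠ m in atTop, A (n, m) ≤ B (n, m)) ∨
    (∀ᶠ m in atTop, B (n, m) ≤ A (n, m)))

/-- A family of arrays is τ-diagonalizable. -/
def TauDiag (𝒜 : Set Arr) : Prop :=
  ∃ g : ℕ → ℕ,
    (∀ A ∈ 𝒜, ∃ᶠ n in atTop, A (n, g n) = true) ∧
    (∀ A ∈ 𝒜, ∀ B ∈ 𝒜,
      (∀ᶠ n in atTop, A (n, g n) ≤ B (n, g n)) ∨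
      (∀ᶠ n in atTop, B (n, g n) ≤ A (n, g n)))

/-- A family of arrays is o-diagonalizable. -/
def ODiag (𝒜 : Set Arr) : Prop :=
  ∃ g : ℕ → ℕ, ∀ A ∈ 𝒜, ∃ n, A (n, g n) = true

/-- An ω-family of arrays: rows frequently 1 and, for each `n`,
the family of the `n`-th rows is centered. -/
def OmegaFamily (𝒜 : Set Arr) : Prop :=
  (∀ A ∈ 𝒜, ∀ n, ∃ᶠ m in atTop, A (n, m) = true) ∧
  (∀ n, ∀ 𝒜' ⊆ 𝒜, 𝒜'.Finite → {m | ∀ A ∈ 𝒜', A (n, m) = true}.Infinite)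

/-- The bounding number 𝔟. -/
def bNum : Cardinal :=
  sInf {c | ∃ F : Set (ℕ → ℕ), Cardinal.mk F = c ∧
    ¬ ∃ g : ℕ → ℕ, ∀ f ∈ F, ∀ᶠ n in atTop, f n ≤ g n}

/-- The splitting number 𝔰. -/
def sNum : Cardinal :=
  sInf {c | ∃ S : Set (Set ℕ), Cardinal.mk S = c ∧ (∀ s ∈ S, s.Infinite) ∧
    ∀ a : Set ℕ, a.Infinite → ∃ s ∈ S, (a ∩ s).Infinite ∧ (a \ s).Infinite}

/-- The tower number 𝔱. -/
def tNum : Cardinal :=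
  sInf {c | ∃ T : Set (Set ℕ), Cardinal.mk T = c ∧ (∀ t ∈ T, t.Infinite) ∧
    (∀ a ∈ T, ∀ b ∈ T, (a \ b).Finite ∨ (b \ a).Finite) ∧
    ¬ ∃ a : Set ℕ, a.Infinite ∧ ∀ t ∈ T, (a \ t).Finite}

/-- cov(M): the least number of meager sets covering the Baire space. -/
def covM : Cardinal :=
  sInf {c | ∃ 𝒞 : Set (Set (ℕ → ℕ)), Cardinal.mk 𝒞 = c ∧
    (∀ M ∈ 𝒞, IsMeagre M) ∧ ⋃₀ 𝒞 = Set.univ}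

/-- The o-diagonalization number: the minimal cardinality of a τ-family
which is not o-diagonalizable. -/
def odNum : Cardinal :=
  sInf {c | ∃ 𝒜 : Set Arr, Cardinal.mk 𝒜 = c ∧ TauFamily 𝒜 ∧ ¬ ODiag 𝒜}

section Covers

variable (α : Type*)

/-- A countable cover of the space `α`. -/
def CountCover (𝒰 : Set (Set α)) : Prop :=
  𝒰.Countable ∧ ⋃₀ 𝒰 = Set.univ ∧ Set.univ ∉ 𝒰

/-- A (countable) γ-cover. -/
def GammaCover (𝒰 : Set (Set α)) : Prop :=
  CountCover α 𝒰 ∧ 𝒰.Infinite ∧ ∀ x : α, {U | U ∈ 𝒰 ∧ x ∉ U}.Finite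

/-- A (countable) τ-cover. -/
def TauCover (𝒰 : Set (Set α)) : Prop :=
  CountCover α 𝒰 ∧ (∀ x : α, {U | U ∈ 𝒰 ∧ x ∈ U}.Infinite) ∧
  ∀ x y : α, {U | U ∈ 𝒰 ∧ x ∈ U ∧ y ∉ U}.Finite ∨ {U | U ∈ 𝒰 ∧ y ∈ U ∧ x ∉ U}.Finite

/-- A (countable) ω-cover. -/
def OmegaCover (𝒰 : Set (Set α)) : Prop :=
  CountCover α 𝒰 ∧ ∀ F : Set α, F.Finite → ∃ U ∈ 𝒰, F ⊆ U

variable [TopologicalSpace α]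

/-- All members are open. -/
def OpenFam (𝒰 : Set (Set α)) : Prop := ∀ U ∈ 𝒰, IsOpen U

/-- All members are clopen. -/
def ClopenFam (𝒰 : Set (Set α)) : Prop := ∀ U ∈ 𝒰, IsClopen U

/-- The class O of countable open covers. -/
def OCov (𝒰 : Set (Set α)) : Prop := CountCover α 𝒰 ∧ OpenFam α 𝒰
/-- The class Γ of countable open γ-covers. -/
def OGamma (𝒰 : Set (Set α)) : Prop := GammaCover α 𝒰 ∧ OpenFam α 𝒰
/-- The class Τ of countable open τ-covers. -/
def OTau (𝒰 : Set (Set α)) : Prop := TauCover α 𝒰 ∧ OpenFam α 𝒰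
/-- The class Ω of countable open ω-covers. -/
def OOmega (𝒰 : Set (Set α)) : Prop := OmegaCover α 𝒰 ∧ OpenFam α 𝒰

/-- The class C of countable clopen covers. -/
def KCov (𝒰 : Set (Set α)) : Prop := CountCover α 𝒰 ∧ ClopenFam α 𝒰
/-- The class C_Γ of countable clopen γ-covers. -/
def KGamma (𝒰 : Set (Set α)) : Prop := GammaCover α 𝒰 ∧ ClopenFam α 𝒰
/-- The class C_Τ of countable clopen τ-covers. -/
def KTau (𝒰 : Set (Set α)) : Prop := TauCover α 𝒰 ∧ ClopenFam α 𝒰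

end Covers

/-- The selection principle S1(𝒜,ℬ). -/
def S1 (α : Type*) (𝒜 ℬ : Set (Set α) → Prop) : Prop :=
  ∀ U : ℕ → Set (Set α), (∀ n, 𝒜 (U n)) →
    ∃ V : ℕ → Set α, (∀ n, V n ∈ U n) ∧ ℬ (range V)

/-- The selection principle Sfin(𝒜,ℬ). -/
def SFin (α : Type*) (𝒜 ℬ : Set (Set α) → Prop) : Prop :=
  ∀ U : ℕ → Set (Set α), (∀ n, 𝒜 (U n)) →
    ∃ F : ℕ → Set (Set α), (∀ n, (F n).Finite ∧ F n ⊆ U n) ∧ ℬ (⋃ n, F n)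

/-- The selection principle Ufin(𝒜,ℬ). -/
def UFin (α : Type*) (𝒜 ℬ : Set (Set α) → Prop) : Prop :=
  ∀ U : ℕ → Set (Set α), (∀ n, 𝒜 (U n)) →
    (∀ n, ¬ ∃ F : Set (Set α), F ⊆ U n ∧ F.Finite ∧ ⋃₀ F = Set.univ) →
    ∃ F : ℕ → Set (Set α), (∀ n, (F n).Finite ∧ F n ⊆ U n) ∧
      ℬ (range fun n => ⋃₀ F n)

/-- The critical cardinality non(P) of a property `P` of sets of reals:
the minimal cardinality of an infinite subset of the Cantor space not satisfying `P`. -/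
def nonP (P : Set Cantor → Prop) : Cardinal :=
  sInf {c | ∃ X : Set Cantor, X.Infinite ∧ ¬ P X ∧ Cardinal.mk X = c}

/-- The collection of cardinalities of witnessing families of `f`-sequences for `θ_f`. -/
def ThetaSet (f : ℕ → ℕ) : Set Cardinal :=
  {c | ∃ ℱ : Set (ℕ → Set ℕ), Cardinal.mk ℱ = c ∧
    (∀ σ ∈ ℱ, ∀ n, σ n ⊆ Iio (f n)) ∧
    (∀ σ ∈ ℱ, ∀ᶠ n in atTop, (σ n).Nonempty) ∧
    (∀ σ ∈ ℱ, ∀ η ∈ ℱ, (∀ᶠ n in atTop, σ n ⊆ η n) ∨ (∀ᶠ n in atTop, η n ⊆ σ n)) ∧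
    ¬ ∃ g : ℕ → ℕ, ∀ σ ∈ ℱ, ∃ n, g n ∈ σ n}

/-- The cardinal θ_f; equal to 𝔠⁺ if no witnessing family exists. -/
def theta (f : ℕ → ℕ) : Cardinal :=
  if (ThetaSet f).Nonempty then sInf (ThetaSet f) else Order.succ Cardinal.continuum

/-- θ* = min over f (with all values ≥ 2) of θ_f. -/
def thetaStar : Cardinal :=
  sInf {c | ∃ f : ℕ → ℕ, (∀ n, 2 ≤ f n) ∧ theta f = c}

/-- The collection of cardinalities of witnessing families for `𝔈_f`. -/
def ESet (f : ℕ → ℕ) : Set Cardinal :=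
  {c | ∃ F : Set (ℕ → ℕ), Cardinal.mk F = c ∧ (∀ h ∈ F, ∀ n, h n < f n) ∧
    ∀ g : ℕ → ℕ, ∃ h ∈ F, ∀ n, h n ≠ g n}

/-- The cardinal 𝔈_f; equal to 𝔠⁺ if no witnessing family exists. -/
def ENum (f : ℕ → ℕ) : Cardinal :=
  if (ESet f).Nonempty then sInf (ESet f) else Order.succ Cardinal.continuum

/-- 𝔈* = min over f (with all values ≥ 1) of 𝔈_f. -/
def EStar : Cardinal :=
  sInf {c | ∃ f : ℕ → ℕ, (∀ n, 1 ≤ f n) ∧ ENum f = c}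

section TauSequences

variable {α : Type*}

def IsTauSeq (U : ℕ → Set α) : Prop :=
  (∀ x, {m | x ∈ U m}.Infinite) ∧
    ∀ x y, ({m | x ∈ U m} \ {m | y ∈ U m}).Finite ∨ ({m | y ∈ U m} \ {m | x ∈ U m}).Finite

theorem image_setOf_mem (U : ℕ → Set α) (x : α) :
    U '' {m | x ∈ U m} = {W | W ∈ range U ∧ x ∈ W} := by
  ext W
  constructor
  · rintro ⟨m, hm, rfl⟩
    exact ⟨mem_range_self m, hm⟩
  · rintro ⟨⟨m, rfl⟩, hm⟩
    exact ⟨m, hm, rfl⟩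

theorem image_setOf_mem_diff (U : ℕ → Set α) (x y : α) :
    U '' ({m | x ∈ U m} \ {m | y ∈ U m}) = {W | W ∈ range U ∧ x ∈ W ∧ y ∉ W} := by
  ext W
  constructor
  · rintro ⟨m, hm, rfl⟩
    exact ⟨mem_range_self m, hm⟩
  · rintro ⟨⟨m, rfl⟩, hm⟩
    exact ⟨m, hm, rfl⟩

namespace IsTauSeq

variable {U : ℕ → Set α}

theorem directed (h : IsTauSeq U) :
    Directed (fun s t : Set ℕ => (t \ s).Finite) fun x => {m | x ∈ U m} := by
  intro x y
  rcases h.2 x y with hxy | hyx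
  · exact ⟨x, by simp, hxy⟩
  · exact ⟨y, hyx, by simp⟩

/-- Infinitely many indices do not guarantee infinitely many distinct terms; this is where the
τ-condition enters. If `x` lay in only finitely many distinct terms `W`, pick `v W ∉ W` and a
point `z` whose index set is almost contained in those of `x` and of all `v W`: then every
index of `z` either misses `x` or lies in a term `W` avoiding `v W`, so it is finite. -/
theorem infinite_image_setOf_mem (h : IsTauSeq U) (hU : ∀ m, U m ≠ Set.univ) (x : α) :
    (U '' {m | x ∈ U m}).Infinite := by
  intro hfin
  have hout : ∀ W ∈ U '' {m | x ∈ U m}, ∃ v, v ∉ W := by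
    rintro _ ⟨m, -, rfl⟩
    exact (ne_univ_iff_exists_notMem _).1 (hU m)
  have : Nonempty α := ⟨x⟩
  choose! v hv using hout
  have : IsTrans (Set ℕ) fun s t => (t \ s).Finite :=
    ⟨fun _ _ _ hab hbc => (hbc.union hab).subset (sdiff_triangle _ _ _)⟩
  obtain ⟨z, hz⟩ := h.directed.finite_set_le ((hfin.image v).insert x)
  have hcover : {m | z ∈ U m} ⊆ ({m | z ∈ U m} \ {m | x ∈ U m}) ∪
      ⋃ W ∈ U '' {m | x ∈ U m}, {m | z ∈ U m} \ {m | v W ∈ U m} := by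
    intro m hzm
    by_cases hxm : x ∈ U m
    · exact Or.inr (mem_biUnion (mem_image_of_mem U hxm) ⟨hzm, hv _ (mem_image_of_mem U hxm)⟩)
    · exact Or.inl ⟨hzm, hxm⟩
  refine h.1 z (((hz x (mem_insert _ _)).union (hfin.biUnion fun W hW => ?_)).subset hcover)
  exact hz (v W) (mem_insert_of_mem _ (mem_image_of_mem v hW))

theorem tauCover_range (h : IsTauSeq U) (hU : ∀ m, U m ≠ Set.univ) : TauCover α (range U) := by
  refine ⟨⟨countable_range U, ?_, fun ⟨m, hm⟩ => hU m hm⟩, fun x => ?_, fun x y => ?_⟩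
  · exact sUnion_range U ▸ iUnion_eq_univ_iff.2 fun x => (h.1 x).nonempty
  · exact image_setOf_mem U x ▸ h.infinite_image_setOf_mem hU x
  · rw [← image_setOf_mem_diff, ← image_setOf_mem_diff]
    exact (h.2 x y).imp (Finite.image U) (Finite.image U)

end IsTauSeq

theorem TauCover.isTauSeq {e : ℕ → Set α} (h : TauCover α (range e)) (he : Function.Injective e) :
    IsTauSeq e := by
  refine ⟨fun x => ?_, fun x y => ?_⟩
  · exact Infinite.of_image e (image_setOf_mem e x ▸ h.2.1 x)
  · exact (h.2.2 x y).imp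
      (fun hxy => Finite.of_finite_image (image_setOf_mem_diff e x y ▸ hxy) he.injOn)
      (fun hyx => Finite.of_finite_image (image_setOf_mem_diff e y x ▸ hyx) he.injOn)

theorem TauCover.exists_injective_range_eq [Nonempty α] {𝒰 : Set (Set α)} (h : TauCover α 𝒰) :
    ∃ e : ℕ → Set α, Function.Injective e ∧ range e = 𝒰 := by
  have : Countable 𝒰 := h.1.1.to_subtype
  have : Infinite 𝒰 := ((h.2.1 (Classical.arbitrary α)).mono fun _ hU => hU.1).to_subtype
  obtain ⟨eqv⟩ := nonempty_equiv_of_countable (α := ℕ) (β := 𝒰)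
  exact ⟨(↑) ∘ eqv, Subtype.coe_injective.comp eqv.injective, by
    rw [range_comp, eqv.range_eq_univ, image_univ, Subtype.range_coe]⟩

end TauSequences

section Arrays

variable {α : Type*}

theorem tauFamily_range_iff (Ψ : α → Arr) :
    TauFamily (range Ψ) ↔ ∀ n, IsTauSeq fun m => {x | Ψ x (n, m) = true} := by
  simp only [TauFamily, IsTauSeq, forall_mem_range, ← Nat.cofinite_eq_atTop,
    frequently_cofinite_iff_infinite, eventually_cofinite, Bool.le_iff_imp, Classical.not_imp]
  exact ⟨fun h n => ⟨fun x => h.1 x n, fun x y => h.2 x y n⟩,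
    fun h => ⟨fun x n => (h n).1 x, fun x y n => (h n).2 x y⟩⟩

theorem oDiag_range_iff (Ψ : α → Arr) :
    ODiag (range Ψ) ↔ ∃ g : ℕ → ℕ, ∀ x, ∃ n, Ψ x (n, g n) = true := by
  simp only [ODiag, forall_mem_range]

theorem continuous_pi_bool_iff [TopologicalSpace α] {ι : Type*} {Ψ : α → ι → Bool} :
    Continuous Ψ ↔ ∀ i, IsClopen {x | Ψ x i = true} := by
  refine continuous_pi_iff.trans (forall_congr' fun i => ?_)
  have : (fun x => Ψ x i) = {x | Ψ x i = true}.boolIndicator := by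
    ext x
    by_cases hx : Ψ x i = true <;> simp_all [boolIndicator]
  rw [this, continuous_boolIndicator_iff_isClopen]

end Arrays

section SelectionPrinciple

variable {α : Type*} [TopologicalSpace α]

theorem oDiag_range_of_s1 (hS1 : S1 α (KTau α) (KCov α)) {Ψ : α → Arr} (hΨ : Continuous Ψ)
    (hτ : TauFamily (range Ψ)) : ODiag (range Ψ) := by
  rw [oDiag_range_iff]
  set U : ℕ → ℕ → Set α := fun n m => {x | Ψ x (n, m) = true}
  by_cases hfull : ∃ n m, U n m = Set.univ
  · obtain ⟨n, m, hnm⟩ := hfull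
    exact ⟨fun _ => m, fun x => ⟨n, eq_univ_iff_forall.1 hnm x⟩⟩
  push Not at hfull
  have hKTau : ∀ n, KTau α (range (U n)) := fun n =>
    ⟨((tauFamily_range_iff Ψ).1 hτ n).tauCover_range (hfull n),
      forall_mem_range.2 fun m => continuous_pi_bool_iff.1 hΨ (n, m)⟩
  obtain ⟨V, hVU, hV⟩ := hS1 _ hKTau
  choose g hg using hVU
  refine ⟨g, fun x => ?_⟩
  obtain ⟨n, hxn⟩ := iUnion_eq_univ_iff.1 (sUnion_range V ▸ hV.1.2.1) x
  exact ⟨n, ((hg n).symm ▸ hxn : x ∈ U n (g n))⟩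

theorem s1_of_oDiag_range [Nonempty α]
    (h : ∀ Ψ : α → Arr, Continuous Ψ → TauFamily (range Ψ) → ODiag (range Ψ)) :
    S1 α (KTau α) (KCov α) := by
  intro 𝒰 h𝒰
  choose e he_inj he_range using fun n => (h𝒰 n).1.exists_injective_range_eq
  have he_mem : ∀ n m, e n m ∈ 𝒰 n := fun n m => he_range n ▸ mem_range_self m
  set Ψ : α → Arr := fun x p => decide (x ∈ e p.1 p.2)
  have hrow : ∀ n m, {x | Ψ x (n, m) = true} = e n m := fun n m => by simp [Ψ]
  have hΨ : Continuous Ψ :=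
    continuous_pi_bool_iff.2 fun p => hrow p.1 p.2 ▸ (h𝒰 p.1).2 _ (he_mem p.1 p.2)
  have hτ : TauFamily (range Ψ) := (tauFamily_range_iff Ψ).2 fun n => by
    simpa only [hrow] using ((he_range n).symm ▸ (h𝒰 n).1 : TauCover α _).isTauSeq (he_inj n)
  obtain ⟨g, hg⟩ := (oDiag_range_iff Ψ).1 (h Ψ hΨ hτ)
  refine ⟨fun n => e n (g n), fun n => he_mem n (g n),
    ⟨countable_range _, ?_, fun ⟨n, hn⟩ => (h𝒰 n).1.1.2.2 (hn ▸ he_mem n (g n))⟩,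
    forall_mem_range.2 fun n => (h𝒰 n).2 _ (he_mem n (g n))⟩
  refine sUnion_range _ ▸ iUnion_eq_univ_iff.2 fun x => ?_
  obtain ⟨n, hn⟩ := hg x
  exact ⟨n, hrow n (g n) ▸ hn⟩

end SelectionPrinciple

/-- A space satisfies S1(C_Τ,C) iff every continuous image in `2^(ℕ×ℕ)`
which is a τ-family is o-diagonalizable. -/
theorem stmt13 (X : Set Cantor) (hX : X.Infinite) :
    S1 ↥X (KTau ↥X) (KCov ↥X) ↔
      ∀ Ψ : ↥X → Arr, Continuous Ψ → TauFamily (range Ψ) → ODiag (range Ψ) := by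
  have : Nonempty X := hX.nonempty.to_subtype
  exact ⟨fun hS1 _ hΨ hτ => oDiag_range_of_s1 hS1 hΨ hτ, s1_of_oDiag_range⟩

end
end

section
/- For every f : ℕ → ℕ with f(n) ≥ 2 for all n, od ≤ θ_f, where od is the minimal cardinality of a τ-family that is not o-diagonalizable. -/
open Set Filter Cardinal
open scoped Classical

noncomputable section

/-- Auxiliary: the array associated to an `f`-sequence `σ`. -/
def mkArr16 (σ : ℕ → Set ℕ) : Arr :=
  fun q => decide ((Nat.unpair q.2).2 ∈ σ (Nat.pair q.1 (Nat.unpair q.2).1))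

lemma mkArr16_freq (σ : ℕ → Set ℕ) (hne : ∀ᶠ n in atTop, (σ n).Nonempty) (n : ℕ) :
    ∃ᶠ m in atTop, mkArr16 σ (n, m) = true := by
  rw [Filter.frequently_atTop]
  intro N
  obtain ⟨N₀, hN₀⟩ := Filter.eventually_atTop.1 hne
  obtain ⟨k, hk⟩ := hN₀ (Nat.pair n (max N N₀))
    (le_trans (le_max_right _ _) (Nat.right_le_pair _ _))
  refine ⟨Nat.pair (max N N₀) k, le_trans (le_max_left _ _) (Nat.left_le_pair _ _), ?_⟩
  simp [mkArr16, Nat.unpair_pair, hk]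

lemma mkArr16_mono (f : ℕ → ℕ) (σ η : ℕ → Set ℕ)
    (hσf : ∀ j, σ j ⊆ Set.Iio (f j))
    (hsub : ∀ᶠ j in atTop, σ j ⊆ η j) (n : ℕ) :
    ∀ᶠ m in atTop, mkArr16 σ (n, m) ≤ mkArr16 η (n, m) := by
  obtain ⟨N₀, hN₀⟩ := Filter.eventually_atTop.1 hsub
  set K := (Finset.range N₀).sup f with hK
  rw [Filter.eventually_atTop]
  refine ⟨(N₀ + K + 1) ^ 2, fun m hm => ?_⟩
  set a := (Nat.unpair m).1 with ha
  set k := (Nat.unpair m).2 with hkm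
  simp only [mkArr16]
  refine Bool.le_iff_imp.2 ?_
  simp only [decide_eq_true_eq]
  intro h
  have hj : N₀ ≤ Nat.pair n a := by
    by_contra hlt
    push_neg at hlt
    have haN : a < N₀ := lt_of_le_of_lt (Nat.right_le_pair n a) hlt
    have hkK : k < K := lt_of_lt_of_le (hσf _ h)
      (Finset.le_sup (Finset.mem_range.2 hlt))
    have hpm : Nat.pair a k = m := Nat.pair_unpair m
    have hmm : m < (max a k + 1) ^ 2 := by
      rw [← hpm]; exact Nat.pair_lt_max_add_one_sq a k
    have : max a k + 1 ≤ N₀ + K + 1 := by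
      have : max a k < N₀ + K := by
        rcases max_cases a k with ⟨h1, _⟩ | ⟨h1, _⟩ <;> omega
      omega
    have := Nat.pow_le_pow_left this 2
    omega
  exact hN₀ _ hj h

/-- For every `f` with all values at least 2, od ≤ θ_f. -/
theorem stmt16 (f : ℕ → ℕ) (hf : ∀ n, 2 ≤ f n) : odNum ≤ theta f := by
  by_cases hset : (ThetaSet f).Nonempty
  · rw [theta, if_pos hset]
    obtain ⟨ℱ, hcard, hIio, hne, hchain, hdiag⟩ := csInf_mem hset
    set 𝒜 : Set Arr := mkArr16 '' ℱ with h𝒜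
    have hTau : TauFamily 𝒜 := by
      constructor
      · rintro A ⟨σ, hσ, rfl⟩ n
        exact mkArr16_freq σ (hne σ hσ) n
      · rintro A ⟨σ, hσ, rfl⟩ B ⟨η, hη, rfl⟩ n
        rcases hchain σ hσ η hη with h | h
        · exact Or.inl (mkArr16_mono f σ η (hIio σ hσ) h n)
        · exact Or.inr (mkArr16_mono f η σ (hIio η hη) h n)
    have hNOD : ¬ ODiag 𝒜 := by
      rintro ⟨g, hg⟩
      apply hdiag
      refine ⟨fun j => (Nat.unpair (g (Nat.unpair j).1)).2, ?_⟩
      intro σ hσ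
      obtain ⟨n, hn⟩ := hg (mkArr16 σ) ⟨σ, hσ, rfl⟩
      refine ⟨Nat.pair n (Nat.unpair (g n)).1, ?_⟩
      simp only [Nat.unpair_pair]
      simpa [mkArr16, decide_eq_true_eq] using hn
    have h1 : odNum ≤ Cardinal.mk 𝒜 := csInf_le' ⟨𝒜, rfl, hTau, hNOD⟩
    refine h1.trans ?_
    rw [← hcard]
    exact Cardinal.mk_image_le
  · rw [theta, if_neg hset]
    set 𝒜 : Set Arr := Set.range (fun g : ℕ → ℕ => (fun q => decide (q.2 ≠ g q.1) : Arr))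
      with h𝒜
    have hTau : TauFamily 𝒜 := by
      constructor
      · rintro A ⟨g, rfl⟩ n
        rw [Filter.frequently_atTop]
        intro N
        refine ⟨max N (g n + 1), le_max_left _ _, ?_⟩
        have : max N (g n + 1) ≠ g n := by omega
        simp [this]
      · rintro A ⟨g, rfl⟩ B ⟨g', rfl⟩ n
        left
        rw [Filter.eventually_atTop]
        refine ⟨g' n + 1, fun m hm => ?_⟩
        have : m ≠ g' n := by omega
        simp [this]
    have hNOD : ¬ ODiag 𝒜 := by
      rintro ⟨g, hg⟩
      obtain ⟨n, hn⟩ := hg _ ⟨g, rfl⟩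
      simp at hn
    have h1 : odNum ≤ Cardinal.mk 𝒜 := csInf_le' ⟨𝒜, rfl, hTau, hNOD⟩
    refine h1.trans (le_trans ?_ (Order.le_succ _))
    refine le_trans Cardinal.mk_range_le ?_
    rw [← Cardinal.aleph0_power_aleph0, ← Cardinal.mk_nat, Cardinal.power_def]

end
end

section
/- If E* = ℵ₁, then θ* = ℵ₁, where E* = min{E_f : f : ℕ → ℕ with f(n) ≥ 1 for all n} and θ* = min{θ_f : f : ℕ → ℕ with f(n) ≥ 2 for all n}. -/
open Set Filter Cardinal
open scoped Classical

noncomputable section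

namespace Stmt19


/-! ### Base-R digits -/

def dig (R v i : ℕ) : ℕ := v / R ^ i % R

lemma exists_digits {R : ℕ} (hR : 2 ≤ R) :
    ∀ (L : ℕ) (d : ℕ → ℕ), (∀ i < L, d i < R) → ∃ v < R ^ L, ∀ i < L, dig R v i = d i := by
  have hR0 : 0 < R := by omega
  intro L
  induction L with
  | zero =>
    intro d _
    exact ⟨0, by simp, fun i hi => absurd hi (Nat.not_lt_zero i)⟩
  | succ L ih =>
    intro d hd
    obtain ⟨v, hv, hdig⟩ := ih (fun i => d (i + 1)) (fun i hi => hd (i + 1) (by omega))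
    have hd0 : d 0 < R := hd 0 (by omega)
    refine ⟨d 0 + R * v, ?_, ?_⟩
    · have h2 : R * (v + 1) ≤ R * R ^ L := Nat.mul_le_mul_left _ (by omega)
      have : d 0 + R * v < R * (v + 1) := by nlinarith
      have hpow : R ^ (L + 1) = R * R ^ L := by rw [pow_succ, Nat.mul_comm]
      omega
    · intro i hi
      match i with
      | 0 =>
        show (d 0 + R * v) / R ^ 0 % R = d 0
        rw [pow_zero, Nat.div_one, Nat.add_mul_mod_self_left, Nat.mod_eq_of_lt hd0]
      | (i + 1) =>
        show (d 0 + R * v) / R ^ (i + 1) % R = d (i + 1)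
        have hdiv : (d 0 + R * v) / R ^ (i + 1) = v / R ^ i := by
          rw [pow_succ', ← Nat.div_div_eq_div_mul, Nat.add_mul_div_left _ _ hR0,
            Nat.div_eq_of_lt hd0, Nat.zero_add]
        rw [hdiv]
        exact hdig i (by omega)

/-! ### The index type W of order type ω₁ -/

abbrev W : Type := (Cardinal.aleph 1).ord.ToType

lemma mk_W : #W = Cardinal.aleph 1 := by
  rw [Cardinal.mk_toType, Cardinal.card_ord]

lemma countable_Iio (w : W) : (Set.Iio w).Countable := by
  apply (Cardinal.countable_iff_lt_aleph_one _).2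
  haveI : IsWellOrder W (· < ·) := isWellOrder_lt
  calc #↥(Set.Iio w) = #{y : W // y < w} :=
        Cardinal.mk_congr (Equiv.subtypeEquivRight fun _ => Iff.rfl)
    _ = (Ordinal.typein (α := W) (· < ·) w).card := Ordinal.card_typein w
    _ < Cardinal.aleph 1 := Cardinal.card_typein_toType_lt (Cardinal.aleph 1) w

lemma exists_gt (w : W) : ∃ w' : W, w < w' := by
  by_contra hc
  push_neg at hc
  have hcnt : (Set.univ : Set W).Countable := by
    have hsub : (Set.univ : Set W) ⊆ Set.Iic w := fun x _ => hc x
    exact Set.Countable.mono hsub (by rw [← Set.Iio_insert]; exact (countable_Iio w).insert w)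
  have h3 : #W ≤ ℵ₀ := Cardinal.mk_le_aleph0_iff.2 (Set.countable_univ_iff.1 hcnt)
  rw [mk_W] at h3
  exact absurd h3 (not_le.2 Cardinal.aleph0_lt_aleph_one)

/-! ### Countable families are o-diagonalizable -/

lemma diag_of_countable (ℱ : Set (ℕ → Set ℕ)) (hcnt : ℱ.Countable)
    (hne : ∀ σ ∈ ℱ, ∀ᶠ n in atTop, (σ n).Nonempty) :
    ∃ g : ℕ → ℕ, ∀ σ ∈ ℱ, ∃ n, g n ∈ σ n := by
  rcases ℱ.eq_empty_or_nonempty with rfl | hne'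
  · exact ⟨fun _ => 0, by simp⟩
  obtain ⟨e, he⟩ := hcnt.exists_eq_range hne'
  have hstep : ∀ (m k : ℕ), ∃ n, m < n ∧ (e k n).Nonempty := by
    intro m k
    have hev : ∀ᶠ n in atTop, (e k n).Nonempty := hne (e k) (by rw [he]; exact ⟨k, rfl⟩)
    obtain ⟨a, ha⟩ := eventually_atTop.1 hev
    exact ⟨max a (m + 1), lt_of_lt_of_le (Nat.lt_succ_self m) (le_max_right _ _),
      ha _ (le_max_left _ _)⟩
  choose nxt h1 h2 using hstep
  obtain ⟨N, hNne, hNmono⟩ : ∃ N : ℕ → ℕ, (∀ k, (e k (N k)).Nonempty) ∧ StrictMono N := by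
    refine ⟨fun k => Nat.rec (motive := fun _ => ℕ) (nxt 0 0) (fun k Nk => nxt Nk (k + 1)) k,
      ?_, ?_⟩
    · intro k
      cases k with
      | zero => exact h2 0 0
      | succ k => exact h2 _ _
    · exact strictMono_nat_of_lt_succ (fun k => h1 _ _)
  refine ⟨fun (n : ℕ) => if hn : ∃ k, N k = n then (hNne hn.choose).some else 0, ?_⟩
  intro σ hσ
  rw [he] at hσ
  obtain ⟨k, rfl⟩ := hσ
  refine ⟨N k, ?_⟩
  have hn : ∃ k', N k' = N k := ⟨k, rfl⟩
  show (if hn : ∃ k', N k' = N k then (hNne hn.choose).some else 0) ∈ e k (N k)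
  rw [dif_pos hn, show hn.choose = k from hNmono.injective hn.choose_spec]
  exact (hNne k).some_mem


/-! ### Coherent sequences of injections -/

def GoodE (w : W) (E : W → ℕ) : Prop :=
  Set.InjOn E (Set.Iio w) ∧ {n : ℕ | n ∉ E '' Set.Iio w}.Infinite

def Coh (E E' : W → ℕ) (v : W) : Prop := {x | x < v ∧ E x ≠ E' x}.Finite

/-- One successor-type extension step used in the limit construction. -/
lemma stepF_aux (a b : W) (hab : a < b) (ea eb : W → ℕ) (hGb : GoodE b eb)
    (hcohab : Coh ea eb a)
    (F : W → ℕ) (hFinj : Set.InjOn F (Set.Iio a))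
    (hFcoh : {x | x < a ∧ ea x ≠ F x}.Finite) :
    ∃ F' : W → ℕ, (∀ x, x < a → F' x = F x) ∧ Set.InjOn F' (Set.Iio b) ∧
      {x | x < b ∧ eb x ≠ F' x}.Finite := by
  classical
  have hD : {x | x < a ∧ F x ≠ eb x}.Finite := by
    apply Set.Finite.subset (hFcoh.union hcohab)
    rintro x ⟨hxa, hne⟩
    by_cases h : ea x = F x
    · exact Or.inr ⟨hxa, fun hEq => hne (by rw [← h, hEq])⟩
    · exact Or.inl ⟨hxa, h⟩
  set D := {x | x < a ∧ F x ≠ eb x} with hDdef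
  set C := {u | a ≤ u ∧ u < b ∧ eb u ∈ F '' Set.Iio a} with hCdef
  have hCsub : C ⊆ Set.Iio b := fun u hu => hu.2.1
  have himg : eb '' C ⊆ F '' D := by
    rintro n ⟨u, hu, rfl⟩
    obtain ⟨hau, hub, x, hxa, hFx⟩ := hu
    refine ⟨x, ⟨hxa, fun hFeq => ?_⟩, hFx⟩
    have hux : u = x := hGb.1 hub (hxa.trans hab) (by rw [← hFx, hFeq])
    exact absurd (hux ▸ hau) (not_le.2 hxa)
  have hC : C.Finite :=
    Set.Finite.of_finite_image (Set.Finite.subset (hD.image F) himg) (hGb.1.mono hCsub)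
  have hZ' : ({n : ℕ | n ∉ eb '' Set.Iio b} \ F '' D).Infinite := hGb.2.diff (hD.image F)
  obtain ⟨ι, hι⟩ := Set.countable_iff_exists_injOn.1 hC.countable
  obtain ⟨nem⟩ : Nonempty (ℕ ↪ ↥({n : ℕ | n ∉ eb '' Set.Iio b} \ F '' D)) := ⟨hZ'.natEmbedding⟩
  have hfr_mem : ∀ u : W, ((nem (ι u) : ℕ)) ∈ ({n : ℕ | n ∉ eb '' Set.Iio b} \ F '' D) :=
    fun u => (nem (ι u)).2
  have hfr_inj : Set.InjOn (fun u : W => (nem (ι u) : ℕ)) C := by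
    intro x hx y hy hxy
    exact hι hx hy (nem.injective (Subtype.coe_injective hxy))
  have hFval : ∀ x, x < a → F x ∈ eb '' Set.Iio b ∪ F '' D := by
    intro x hxa
    by_cases hxD : x ∈ D
    · exact Or.inr ⟨x, hxD, rfl⟩
    · have hFeq : F x = eb x := by
        by_contra hne
        exact hxD ⟨hxa, hne⟩
      exact Or.inl ⟨x, hxa.trans hab, hFeq.symm⟩
  refine ⟨fun u => if u < a then F u else if u ∈ C then (nem (ι u) : ℕ) else eb u, ?_, ?_, ?_⟩
  · intro x hx; beta_reduce; rw [if_pos hx]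
  · intro x hx y hy hxy
    beta_reduce at hxy
    by_cases hxa : x < a <;> by_cases hya : y < a
    · exact hFinj hxa hya (by rwa [if_pos hxa, if_pos hya] at hxy)
    · exfalso
      rw [if_pos hxa, if_neg hya] at hxy
      by_cases hyC : y ∈ C
      · rw [if_pos hyC] at hxy
        have hmem := hfr_mem y
        rw [← hxy] at hmem
        rcases hFval x hxa with hm | hm
        · exact hmem.1 hm
        · exact hmem.2 hm
      · rw [if_neg hyC] at hxy
        exact hyC ⟨not_lt.1 hya, hy, x, hxa, hxy⟩
    · exfalso
      rw [if_neg hxa, if_pos hya] at hxy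
      by_cases hxC : x ∈ C
      · rw [if_pos hxC] at hxy
        have hmem := hfr_mem x
        rw [hxy] at hmem
        rcases hFval y hya with hm | hm
        · exact hmem.1 hm
        · exact hmem.2 hm
      · rw [if_neg hxC] at hxy
        exact hxC ⟨not_lt.1 hxa, hx, y, hya, hxy.symm⟩
    · rw [if_neg hxa, if_neg hya] at hxy
      by_cases hxC : x ∈ C <;> by_cases hyC : y ∈ C
      · rw [if_pos hxC, if_pos hyC] at hxy; exact hfr_inj hxC hyC hxy
      · exfalso; rw [if_pos hxC, if_neg hyC] at hxy
        exact (hfr_mem x).1 (by rw [hxy]; exact ⟨y, hy, rfl⟩)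
      · exfalso; rw [if_neg hxC, if_pos hyC] at hxy
        exact (hfr_mem y).1 (by rw [← hxy]; exact ⟨x, hx, rfl⟩)
      · rw [if_neg hxC, if_neg hyC] at hxy; exact hGb.1 hx hy hxy
  · apply Set.Finite.subset (hD.union hC)
    rintro x ⟨hxb, hne⟩
    beta_reduce at hne
    by_cases hxa : x < a
    · left
      refine ⟨hxa, fun hFeq => hne ?_⟩
      beta_reduce
      rw [if_pos hxa, ← hFeq]
    · by_cases hxC : x ∈ C
      · exact Or.inr hxC
      · exfalso
        apply hne
        beta_reduce
        rw [if_neg hxa, if_neg hxC]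

open scoped Classical in
/-- Union along a cofinal sequence. -/
noncomputable def limE (v : ℕ → W) (Fp : ℕ → W → ℕ) : W → ℕ := fun u =>
  if h : ∃ j, u < v j then Fp h.choose u else 0

open scoped Classical in
/-- Make the range coinfinite by shifting along the diagonal `v`. -/
noncomputable def repair (v : ℕ → W) (E0 : W → ℕ) : W → ℕ := fun u =>
  if h : ∃ i, v i = u then E0 (v (2 * h.choose)) else E0 u

lemma limE_eq {v : ℕ → W} {Fp : ℕ → W → ℕ}
    (hcomp : ∀ i j, i ≤ j → ∀ x, x < v i → Fp j x = Fp i x)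
    (u : W) (j : ℕ) (hj : u < v j) : limE v Fp u = Fp j u := by
  have hex : ∃ j', u < v j' := ⟨j, hj⟩
  rw [limE, dif_pos hex]
  rcases le_total hex.choose j with h | h
  · exact (hcomp hex.choose j h u hex.choose_spec).symm
  · exact hcomp j hex.choose h u hj

lemma repair_v {v : ℕ → W} (hvinj : Function.Injective v) (E0 : W → ℕ) (i : ℕ) :
    repair v E0 (v i) = E0 (v (2 * i)) := by
  have h : ∃ i', v i' = v i := ⟨i, rfl⟩
  rw [repair, dif_pos h, hvinj h.choose_spec]

lemma repair_nv {v : ℕ → W} (E0 : W → ℕ) (u : W) (h : ¬ ∃ i, v i = u) :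
    repair v E0 u = E0 u := dif_neg h

lemma exists_ext (w : W) (e : ∀ v : W, v < w → W → ℕ)
    (h1 : ∀ v hv, GoodE v (e v hv))
    (h2 : ∀ u v (hu : u < v) (hv : v < w), Coh (e u (hu.trans hv)) (e v hv) u) :
    ∃ E : W → ℕ, GoodE w E ∧ ∀ v (hv : v < w), Coh (e v hv) E v := by
  classical
  by_cases hfin : (Set.Iio w).Finite
  · obtain ⟨φ, hφ⟩ := Set.countable_iff_exists_injOn.1 (countable_Iio w)
    refine ⟨fun x => 2 * φ x, ⟨?_, ?_⟩, ?_⟩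
    · intro x hx y hy hxy
      have h : 2 * φ x = 2 * φ y := hxy
      exact hφ hx hy (by omega)
    · exact Set.Finite.infinite_compl (hfin.image _)
    · intro v hv
      exact hfin.subset fun x hx => lt_trans hx.1 hv
  · by_cases hmax : ∃ v₀, v₀ < w ∧ ∀ u, u < w → u ≤ v₀
    · obtain ⟨v₀, hv₀w, hm⟩ := hmax
      have hG := h1 v₀ hv₀w
      obtain ⟨fresh, hfresh⟩ := hG.2.nonempty
      refine ⟨fun x => if x = v₀ then fresh else e v₀ hv₀w x, ⟨?_, ?_⟩, ?_⟩
      · intro x hx y hy hxy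
        beta_reduce at hxy
        by_cases hx0 : x = v₀ <;> by_cases hy0 : y = v₀
        · rw [hx0, hy0]
        · exfalso; rw [if_pos hx0, if_neg hy0] at hxy
          exact hfresh ⟨y, lt_of_le_of_ne (hm y hy) hy0, hxy.symm⟩
        · exfalso; rw [if_neg hx0, if_pos hy0] at hxy
          exact hfresh ⟨x, lt_of_le_of_ne (hm x hx) hx0, hxy⟩
        · rw [if_neg hx0, if_neg hy0] at hxy
          exact hG.1 (lt_of_le_of_ne (hm x hx) hx0) (lt_of_le_of_ne (hm y hy) hy0) hxy
      · have hsub : ({n : ℕ | n ∉ e v₀ hv₀w '' Set.Iio v₀} \ {fresh}) ⊆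
            {n : ℕ | n ∉ (fun x => if x = v₀ then fresh else e v₀ hv₀w x) '' Set.Iio w} := by
          rintro n ⟨hn1, hn2⟩ ⟨x, hxw, hEx⟩
          beta_reduce at hEx
          by_cases hx0 : x = v₀
          · rw [if_pos hx0] at hEx
            exact hn2 hEx.symm
          · rw [if_neg hx0] at hEx
            exact hn1 ⟨x, lt_of_le_of_ne (hm x hxw) hx0, hEx⟩
        exact Set.Infinite.mono hsub (hG.2.diff (Set.finite_singleton fresh))
      · intro v hv
        rcases eq_or_lt_of_le (hm v hv) with rfl | hvv₀
        · apply Set.Finite.subset Set.finite_empty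
          rintro x ⟨hxv, hne⟩
          exfalso
          apply hne
          beta_reduce
          rw [if_neg (ne_of_lt hxv)]
        · apply Set.Finite.subset (h2 v v₀ hvv₀ hv₀w)
          rintro x ⟨hxv, hne⟩
          refine ⟨hxv, fun heq => hne ?_⟩
          beta_reduce
          rw [if_neg (ne_of_lt (hxv.trans hvv₀))]
          exact heq
    · -- limit case
      push_neg at hmax
      have hinf : (Set.Iio w).Infinite := hfin
      have hstep : ∀ x : W, x < w → ∃ y, y < w ∧ x < y := by
        intro x hx
        obtain ⟨u, huw, hxu⟩ := hmax x hx
        exact ⟨u, huw, hxu⟩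
      choose nxt hnxt1 hnxt2 using hstep
      obtain ⟨c, hc⟩ := (countable_Iio w).exists_eq_range hinf.nonempty
      have hcmem : ∀ j, c j < w := fun j => by
        have : c j ∈ Set.Iio w := by rw [hc]; exact ⟨j, rfl⟩
        exact this
      obtain ⟨v, hvw, hvmono, hcof⟩ : ∃ v : ℕ → W, (∀ j, v j < w) ∧ StrictMono v ∧
          ∀ x, x < w → ∃ j, x < v j := by
        obtain ⟨V, hV0, hVs⟩ : ∃ V : ℕ → {x : W // x < w}, V 0 = ⟨c 0, hcmem 0⟩ ∧
            ∀ j, ((V j).1 < (V (j+1)).1 ∧ c (j+1) < (V (j+1)).1) := by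
          refine ⟨fun j => Nat.rec (motive := fun _ => {x : W // x < w}) ⟨c 0, hcmem 0⟩
            (fun j p => ⟨nxt (max p.1 (c (j+1))) (max_lt p.2 (hcmem (j+1))),
              hnxt1 _ _⟩) j, rfl, fun j => ?_⟩
          constructor
          · exact lt_of_le_of_lt (le_max_left _ _) (hnxt2 _ _)
          · exact lt_of_le_of_lt (le_max_right _ _) (hnxt2 _ _)
        refine ⟨fun j => (V j).1, fun j => (V j).2,
          strictMono_nat_of_lt_succ (fun j => (hVs j).1), ?_⟩
        intro x hx
        have hxr : x ∈ Set.range c := by rw [← hc]; exact hx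
        obtain ⟨j, rfl⟩ := hxr
        cases j with
        | zero =>
          refine ⟨1, ?_⟩
          have h0 : (V 0).1 = c 0 := by rw [hV0]
          rw [← h0]
          exact (hVs 0).1
        | succ j => exact ⟨j + 1, (hVs j).2⟩
      -- the tower of partial injections
      obtain ⟨Fp, hFp⟩ : ∃ Fp : ∀ j : ℕ, {F : W → ℕ // Set.InjOn F (Set.Iio (v j)) ∧
          {x | x < v j ∧ e (v j) (hvw j) x ≠ F x}.Finite},
          ∀ j, ∀ x, x < v j → (Fp (j+1)).1 x = (Fp j).1 x := by
        have hbase : Set.InjOn (e (v 0) (hvw 0)) (Set.Iio (v 0)) ∧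
            {x | x < v 0 ∧ e (v 0) (hvw 0) x ≠ e (v 0) (hvw 0) x}.Finite :=
          ⟨(h1 _ _).1, Set.Finite.subset Set.finite_empty (fun x hx => (hx.2 rfl).elim)⟩
        have hstep' : ∀ j (F : W → ℕ), (Set.InjOn F (Set.Iio (v j)) ∧
            {x | x < v j ∧ e (v j) (hvw j) x ≠ F x}.Finite) →
            ∃ F' : W → ℕ, (∀ x, x < v j → F' x = F x) ∧ (Set.InjOn F' (Set.Iio (v (j+1))) ∧
              {x | x < v (j+1) ∧ e (v (j+1)) (hvw (j+1)) x ≠ F' x}.Finite) := by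
          intro j F hF
          obtain ⟨F', hext, hinj, hcoh⟩ := stepF_aux (v j) (v (j+1)) (hvmono (Nat.lt_succ_self j))
            (e (v j) (hvw j)) (e (v (j+1)) (hvw (j+1))) (h1 _ _)
            (h2 (v j) (v (j+1)) (hvmono (Nat.lt_succ_self j)) (hvw (j+1)))
            F hF.1 hF.2
          exact ⟨F', hext, hinj, hcoh⟩
        choose step hstep1 hstep2 using hstep'
        refine ⟨fun j => Nat.rec (motive := fun j => {F : W → ℕ // Set.InjOn F (Set.Iio (v j)) ∧
            {x | x < v j ∧ e (v j) (hvw j) x ≠ F x}.Finite})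
            ⟨e (v 0) (hvw 0), hbase⟩
            (fun j p => ⟨step j p.1 p.2, hstep2 j p.1 p.2⟩) j, fun j x hx => ?_⟩
        exact hstep1 j _ _ x hx
      have hcomp : ∀ i j, i ≤ j → ∀ x, x < v i → (Fp j).1 x = (Fp i).1 x := by
        intro i j hij
        induction j with
        | zero =>
          intro x hx
          have : i = 0 := Nat.le_zero.1 hij
          subst this; rfl
        | succ j IH =>
          intro x hx
          rcases Nat.lt_or_ge i (j+1) with hlt | hge
          · have hij' : i ≤ j := Nat.lt_succ_iff.1 hlt
            rw [hFp j x (lt_of_lt_of_le hx (hvmono.monotone hij'))]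
            exact IH hij' x hx
          · have : i = j + 1 := le_antisymm hij hge
            subst this; rfl
      -- E0 and its properties
      set E0 : W → ℕ := limE v (fun j => (Fp j).1) with hE0def
      have hE0 : ∀ (u : W) (j : ℕ), u < v j → E0 u = (Fp j).1 u := fun u j hj =>
        limE_eq hcomp u j hj
      have hE0inj : Set.InjOn E0 (Set.Iio w) := by
        intro x hx y hy hxy
        obtain ⟨jx, hjx⟩ := hcof x hx
        obtain ⟨jy, hjy⟩ := hcof y hy
        have hxj : x < v (max jx jy) := lt_of_lt_of_le hjx (hvmono.monotone (le_max_left _ _))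
        have hyj : y < v (max jx jy) := lt_of_lt_of_le hjy (hvmono.monotone (le_max_right _ _))
        rw [hE0 x _ hxj, hE0 y _ hyj] at hxy
        exact (Fp (max jx jy)).2.1 hxj hyj hxy
      have hE0coh : ∀ v' (hv' : v' < w), {x | x < v' ∧ e v' hv' x ≠ E0 x}.Finite := by
        intro v' hv'
        obtain ⟨j, hj⟩ := hcof v' hv'
        have hsub : {x | x < v' ∧ e v' hv' x ≠ E0 x} ⊆
            {x | x < v j ∧ e (v j) (hvw j) x ≠ (Fp j).1 x} ∪
            {x | x < v' ∧ e v' hv' x ≠ e (v j) (hvw j) x} := by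
          rintro x ⟨hxv', hne⟩
          have hxvj : x < v j := hxv'.trans hj
          rw [hE0 x j hxvj] at hne
          by_cases he : e v' hv' x = e (v j) (hvw j) x
          · exact Or.inl ⟨hxvj, fun heq => hne (by rw [he, heq])⟩
          · exact Or.inr ⟨hxv', he⟩
        exact Set.Finite.subset ((Fp j).2.2.union (h2 v' (v j) hj (hvw j))) hsub
      -- final repair
      have hvinj : Function.Injective v := hvmono.injective
      refine ⟨repair v E0, ⟨?_, ?_⟩, ?_⟩
      · intro x hx y hy hxy
        by_cases hxr : ∃ i, v i = x <;> by_cases hyr : ∃ i, v i = y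
        · obtain ⟨i, rfl⟩ := hxr
          obtain ⟨i', rfl⟩ := hyr
          rw [repair_v hvinj, repair_v hvinj] at hxy
          have h2i := hvinj (hE0inj (hvw (2*i)) (hvw (2*i')) hxy)
          have : i = i' := by omega
          rw [this]
        · exfalso
          obtain ⟨i, rfl⟩ := hxr
          rw [repair_v hvinj, repair_nv E0 y hyr] at hxy
          exact hyr ⟨2 * i, hE0inj (hvw (2*i)) hy hxy⟩
        · exfalso
          obtain ⟨i, rfl⟩ := hyr
          rw [repair_nv E0 x hxr, repair_v hvinj] at hxy
          exact hxr ⟨2 * i, (hE0inj (hvw (2*i)) hx hxy.symm)⟩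
        · rw [repair_nv E0 x hxr, repair_nv E0 y hyr] at hxy
          exact hE0inj hx hy hxy
      · refine Set.infinite_of_injective_forall_mem
          (f := fun i : ℕ => E0 (v (2 * i + 1))) ?_ ?_
        · intro i i' hii'
          have := hvinj (hE0inj (hvw (2*i+1)) (hvw (2*i'+1)) hii')
          omega
        · intro i
          rintro ⟨u, hu, heq⟩
          by_cases hur : ∃ i', v i' = u
          · obtain ⟨i', rfl⟩ := hur
            rw [repair_v hvinj] at heq
            have := hvinj (hE0inj (hvw (2*i')) (hvw (2*i+1)) heq)
            omega
          · rw [repair_nv E0 u hur] at heq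
            exact hur ⟨2 * i + 1, hE0inj (hvw (2*i+1)) hu heq.symm⟩
      · intro v' hv'
        obtain ⟨J, hJ⟩ := hcof v' hv'
        have hsub : {x | x < v' ∧ e v' hv' x ≠ repair v E0 x} ⊆
            {x | x < v' ∧ e v' hv' x ≠ E0 x} ∪ (v '' Set.Iio J) := by
          rintro x ⟨hxv', hne⟩
          by_cases hxr : ∃ i, v i = x
          · obtain ⟨i, rfl⟩ := hxr
            refine Or.inr ⟨i, ?_, rfl⟩
            exact hvmono.lt_iff_lt.1 (hxv'.trans hJ)
          · rw [repair_nv E0 x hxr] at hne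
            exact Or.inl ⟨hxv', hne⟩
        exact Set.Finite.subset ((hE0coh v' hv').union ((Set.finite_Iio J).image v)) hsub

open scoped Classical in
noncomputable def eStep (w : W) (ih : ∀ v : W, v < w → W → ℕ) : W → ℕ :=
  if h : (∀ v (hv : v < w), GoodE v (ih v hv)) ∧
      (∀ u v (hu : u < v) (hv : v < w), Coh (ih u (hu.trans hv)) (ih v hv) u)
  then Classical.choose (exists_ext w ih h.1 h.2)
  else fun _ => 0

noncomputable def eFam : W → W → ℕ := WellFounded.fix wellFounded_lt eStep

lemma eFam_spec (w : W) : GoodE w (eFam w) ∧ ∀ v (hv : v < w), Coh (eFam v) (eFam w) v := by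
  refine WellFounded.induction (C := fun w => GoodE w (eFam w) ∧
    ∀ v (hv : v < w), Coh (eFam v) (eFam w) v) wellFounded_lt w ?_
  intro x IH
  have hcond : (∀ v (hv : v < x), GoodE v (eFam v)) ∧
      (∀ u v (hu : u < v) (hv : v < x), Coh (eFam u) (eFam v) u) :=
    ⟨fun v hv => (IH v hv).1, fun u v hu hv => (IH v hv).2 u hu⟩
  have heq : eFam x = Classical.choose (exists_ext x (fun v _ => eFam v) hcond.1 hcond.2) := by
    have hfix : eFam x = eStep x (fun v _ => eFam v) := WellFounded.fix_eq _ _ _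
    rw [hfix, eStep, dif_pos hcond]
  have hspec := Classical.choose_spec (exists_ext x (fun v _ => eFam v) hcond.1 hcond.2)
  rw [heq]
  exact ⟨hspec.1, fun v hv => hspec.2 v hv⟩

lemma eFam_inj (w : W) : Set.InjOn (eFam w) (Set.Iio w) := (eFam_spec w).1.1

lemma eFam_coh {u w : W} (h : u < w) : {x | x < u ∧ eFam u x ≠ eFam w x}.Finite :=
  (eFam_spec w).2 u h

/-! ### The θ-witness family -/

def Rad (f0 : ℕ → ℕ) (k : ℕ) : ℕ := 2 + (Finset.range (k+1)).sup (fun i => f0 (Nat.pair k i))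

lemma Rad_two_le (f0 : ℕ → ℕ) (k : ℕ) : 2 ≤ Rad f0 k := Nat.le_add_right 2 _

def fDim (f0 : ℕ → ℕ) (k : ℕ) : ℕ := Rad f0 k ^ (k+1)

lemma fDim_two_le (f0 : ℕ → ℕ) (k : ℕ) : 2 ≤ fDim f0 k := by
  calc 2 ≤ Rad f0 k := Rad_two_le f0 k
  _ = Rad f0 k ^ 1 := (pow_one _).symm
  _ ≤ Rad f0 k ^ (k+1) := Nat.pow_le_pow_right (by have := Rad_two_le f0 k; omega) (by omega)

def sig (f0 : ℕ → ℕ) (h : W → ℕ → ℕ) (w : W) (k : ℕ) : Set ℕ :=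
  {v | v < fDim f0 k ∧ ∀ u, u < w → eFam w u ≤ k →
    ∃ i, i ≤ k ∧ dig (Rad f0 k) v i = h u (Nat.pair k i)}

open scoped Classical in
def sig' (f0 : ℕ → ℕ) (h : W → ℕ → ℕ) (p : W × ℕ) (k : ℕ) : Set ℕ :=
  if p.2 ≤ k then sig f0 h p.1 k else ∅

lemma sig_nonempty (f0 : ℕ → ℕ) (h : W → ℕ → ℕ) (hbd : ∀ w n, h w n < f0 n) (w : W) (k : ℕ) :
    (sig f0 h w k).Nonempty := by
  classical
  obtain ⟨d, hd⟩ : ∃ d : ℕ → ℕ, ∀ i, d i = if hi : ∃ u, u < w ∧ eFam w u = i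
      then h hi.choose (Nat.pair k i) else 0 :=
    ⟨fun i => if hi : ∃ u, u < w ∧ eFam w u = i then h hi.choose (Nat.pair k i) else 0,
      fun i => rfl⟩
  have hdlt : ∀ i, i < k + 1 → d i < Rad f0 k := by
    intro i hik
    rw [hd]
    by_cases hi : ∃ u, u < w ∧ eFam w u = i
    · rw [dif_pos hi]
      have hb := hbd hi.choose (Nat.pair k i)
      have hsup : f0 (Nat.pair k i) ≤ (Finset.range (k+1)).sup (fun i => f0 (Nat.pair k i)) :=
        Finset.le_sup (f := fun i => f0 (Nat.pair k i)) (Finset.mem_range.2 hik)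
      have : Rad f0 k = 2 + (Finset.range (k+1)).sup (fun i => f0 (Nat.pair k i)) := rfl
      omega
    · rw [dif_neg hi]
      have := Rad_two_le f0 k
      omega
  obtain ⟨v, hvlt, hdig⟩ := exists_digits (Rad_two_le f0 k) (k+1) d hdlt
  refine ⟨v, hvlt, ?_⟩
  intro u hu huk
  refine ⟨eFam w u, huk, ?_⟩
  have hik : eFam w u < k + 1 := by omega
  rw [hdig _ hik, hd]
  have hi : ∃ u', u' < w ∧ eFam w u' = eFam w u := ⟨u, hu, rfl⟩
  rw [dif_pos hi, eFam_inj w hi.choose_spec.1 hu hi.choose_spec.2]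

lemma sig_mono (f0 : ℕ → ℕ) (h : W → ℕ → ℕ) {w w' : W} (hww' : w < w') :
    ∃ K, ∀ k, K ≤ k → sig f0 h w' k ⊆ sig f0 h w k := by
  have hD := eFam_coh hww'
  obtain ⟨K, hK⟩ := (hD.image (eFam w')).bddAbove
  refine ⟨K, fun k hk v hv => ?_⟩
  obtain ⟨hvlt, hvall⟩ := hv
  refine ⟨hvlt, fun u hu huk => ?_⟩
  refine hvall u (hu.trans hww') ?_
  by_cases hx : eFam w u = eFam w' u
  · rw [← hx]; exact huk
  · exact le_trans (hK ⟨u, ⟨hu, hx⟩, rfl⟩) hk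

lemma upper (f0 : ℕ → ℕ) (h : W → ℕ → ℕ) (hbd : ∀ w n, h w n < f0 n)
    (hcov : ∀ g : ℕ → ℕ, ∃ w, ∀ n, h w n ≠ g n) :
    ∃ f' : ℕ → ℕ, (∀ k, 2 ≤ f' k) ∧ ∃ c ∈ ThetaSet f', c ≤ Cardinal.aleph 1 := by
  classical
  refine ⟨fDim f0, fDim_two_le f0, #↥(Set.range (sig' f0 h)),
    ⟨Set.range (sig' f0 h), rfl, ?_, ?_, ?_, ?_⟩, ?_⟩
  · -- bounded by Iio (fDim f0 n)
    rintro τ ⟨p, rfl⟩ n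
    by_cases hp : p.2 ≤ n
    · rw [sig', if_pos hp]
      exact fun v hv => hv.1
    · rw [sig', if_neg hp]
      exact Set.empty_subset _
  · -- eventually nonempty
    rintro τ ⟨p, rfl⟩
    rw [eventually_atTop]
    refine ⟨p.2, fun k hk => ?_⟩
    rw [sig', if_pos hk]
    exact sig_nonempty f0 h hbd p.1 k
  · -- chain
    rintro τ ⟨p, rfl⟩ η ⟨q, rfl⟩
    rcases lt_trichotomy p.1 q.1 with hlt | heq | hgt
    · refine Or.inr ?_
      obtain ⟨K, hKsub⟩ := sig_mono f0 h hlt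
      rw [eventually_atTop]
      refine ⟨max K (max p.2 q.2), fun k hk => ?_⟩
      have hKk : K ≤ k := le_trans (le_max_left _ _) hk
      have hpk : p.2 ≤ k := le_trans (le_trans (le_max_left _ _) (le_max_right _ _)) hk
      have hqk : q.2 ≤ k := le_trans (le_trans (le_max_right _ _) (le_max_right _ _)) hk
      rw [sig', sig', if_pos hpk, if_pos hqk]
      exact hKsub k hKk
    · rcases le_total p.2 q.2 with hm | hm
      · refine Or.inr (Filter.Eventually.of_forall (fun k => ?_))
        by_cases hq : q.2 ≤ k
        · rw [sig', sig', if_pos hq, if_pos (le_trans hm hq), heq]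
        · rw [sig', if_neg hq]
          exact Set.empty_subset _
      · refine Or.inl (Filter.Eventually.of_forall (fun k => ?_))
        by_cases hp : p.2 ≤ k
        · rw [sig', sig', if_pos hp, if_pos (le_trans hm hp), heq]
        · rw [sig', if_neg hp]
          exact Set.empty_subset _
    · refine Or.inl ?_
      obtain ⟨K, hKsub⟩ := sig_mono f0 h hgt
      rw [eventually_atTop]
      refine ⟨max K (max p.2 q.2), fun k hk => ?_⟩
      have hKk : K ≤ k := le_trans (le_max_left _ _) hk
      have hpk : p.2 ≤ k := le_trans (le_trans (le_max_left _ _) (le_max_right _ _)) hk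
      have hqk : q.2 ≤ k := le_trans (le_trans (le_max_right _ _) (le_max_right _ _)) hk
      rw [sig', sig', if_pos hpk, if_pos hqk]
      exact hKsub k hKk
  · -- not o-diagonalizable
    rintro ⟨g, hg⟩
    obtain ⟨ws, hws⟩ := hcov (fun n => dig (Rad f0 n.unpair.1) (g n.unpair.1) n.unpair.2)
    obtain ⟨w, hww⟩ := exists_gt ws
    obtain ⟨k, hk⟩ := hg (sig' f0 h (w, eFam w ws)) ⟨(w, eFam w ws), rfl⟩
    by_cases hm : eFam w ws ≤ k
    · rw [sig', if_pos hm] at hk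
      obtain ⟨-, hall⟩ := hk
      obtain ⟨i, hik, hdg⟩ := hall ws hww hm
      apply hws (Nat.pair k i)
      show h ws (Nat.pair k i) =
        dig (Rad f0 (Nat.unpair (Nat.pair k i)).1) (g (Nat.unpair (Nat.pair k i)).1)
          (Nat.unpair (Nat.pair k i)).2
      rw [Nat.unpair_pair]
      exact hdg.symm
    · rw [sig', if_neg hm] at hk
      exact absurd hk (Set.notMem_empty _)
  · -- cardinality bound
    calc #↥(Set.range (sig' f0 h)) ≤ #(W × ℕ) := Cardinal.mk_range_le
      _ = #W * #ℕ := by rw [Cardinal.mk_prod, Cardinal.lift_id, Cardinal.lift_id]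
      _ = Cardinal.aleph 1 * ℵ₀ := by rw [mk_W, Cardinal.mk_nat]
      _ = Cardinal.aleph 1 := Cardinal.mul_eq_left Cardinal.aleph0_lt_aleph_one.le
          Cardinal.aleph0_lt_aleph_one.le Cardinal.aleph0_ne_zero

lemma lower_theta (f : ℕ → ℕ) : Cardinal.aleph 1 ≤ theta f := by
  unfold theta
  split_ifs with hne
  · apply le_csInf hne
    rintro c ⟨ℱ, rfl, hsub, hne', hchain, hnd⟩
    by_contra hlt
    push_neg at hlt
    exact hnd (diag_of_countable ℱ ((Cardinal.countable_iff_lt_aleph_one _).2 hlt) hne')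
  · exact le_trans Cardinal.aleph_one_le_continuum (Order.le_succ _)


end Stmt19

/-- If 𝔈* = ℵ₁, then θ* = ℵ₁. -/
theorem stmt19 (h : EStar = Cardinal.aleph 1) : thetaStar = Cardinal.aleph 1 := by
  classical
  have hSne : {c | ∃ f : ℕ → ℕ, (∀ n, 1 ≤ f n) ∧ ENum f = c}.Nonempty :=
    ⟨ENum (fun _ => 1), ⟨fun _ => 1, fun _ => le_refl 1, rfl⟩⟩
  have h1 : Cardinal.aleph 1 ∈ {c | ∃ f : ℕ → ℕ, (∀ n, 1 ≤ f n) ∧ ENum f = c} := by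
    rw [← h]
    exact csInf_mem hSne
  obtain ⟨f0, hf01, hE⟩ := h1
  have hEne : (ESet f0).Nonempty := by
    by_contra hc
    rw [ENum, if_neg hc] at hE
    have hlt : Cardinal.aleph 1 < Order.succ Cardinal.continuum :=
      lt_of_le_of_lt Cardinal.aleph_one_le_continuum (Order.lt_succ _)
    exact absurd hE (ne_of_gt hlt)
  have h2 : Cardinal.aleph 1 ∈ ESet f0 := by
    rw [ENum, if_pos hEne] at hE
    rw [← hE]
    exact csInf_mem hEne
  obtain ⟨F, hFmk, hFbd, hFcov⟩ := h2
  obtain ⟨eqv⟩ : Nonempty (Stmt19.W ≃ ↥F) := Cardinal.eq.1 (by rw [Stmt19.mk_W, hFmk])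
  have hcov : ∀ g : ℕ → ℕ, ∃ w : Stmt19.W, ∀ n, (eqv w : ℕ → ℕ) n ≠ g n := by
    intro g
    obtain ⟨x, hx, hxg⟩ := hFcov g
    refine ⟨eqv.symm ⟨x, hx⟩, fun n => ?_⟩
    have hsx : ((eqv (eqv.symm ⟨x, hx⟩) : ↥F) : ℕ → ℕ) = x := by
      rw [Equiv.apply_symm_apply]
    rw [hsx]
    exact hxg n
  obtain ⟨f', hf'2, c, hcmem, hcle⟩ := Stmt19.upper f0 (fun w => ((eqv w : ↥F) : ℕ → ℕ))
    (fun w n => hFbd _ (eqv w).2 n) hcov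
  have hθle : theta f' ≤ Cardinal.aleph 1 := by
    rw [theta, if_pos ⟨c, hcmem⟩]
    exact le_trans (csInf_le (OrderBot.bddBelow _) hcmem) hcle
  have hup : thetaStar ≤ Cardinal.aleph 1 :=
    le_trans (csInf_le (OrderBot.bddBelow _) ⟨f', hf'2, rfl⟩) hθle
  have hlow : Cardinal.aleph 1 ≤ thetaStar := by
    have hmem0 : theta (fun _ : ℕ => 2) ∈ {c | ∃ f : ℕ → ℕ, (∀ n, 2 ≤ f n) ∧ theta f = c} :=
      ⟨fun _ => 2, fun _ => le_refl 2, rfl⟩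
    apply le_csInf ⟨_, hmem0⟩
    rintro c' ⟨f, hf2, rfl⟩
    exact Stmt19.lower_theta f
  exact le_antisymm hup hlow


end
end
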